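/- (1) The category C⁰ of arc-generated topological spaces is cartesian closed: the exponential law for sets restricts to a natural bijection C⁰(A, C⁰(X,Y)) ≅ C⁰(A × X, Y), where the mapping space C⁰(X,Y) is obtained by applying the arc-generation coreflection α to the set of continuous maps with the compact-open topology, and A × X is the product in C⁰. (2) If X and Y are arc-generated spaces and Y is locally compact, then the product of X and Y in C⁰ coincides with the product in the category of topological spaces. -/

import Mathlib

set_option autoImplicit false

open Set Function Topology

noncomputable section

/-- The topology on `X` coinduced by all continuous curves `ℝ → X`. -/
def arcGen (X : Type) [TopologicalSpace X] : TopologicalSpace X :=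
  ⨆ f : {f : ℝ → X // Continuous f}, TopologicalSpace.coinduced f.1 inferInstance

/-- A topological space is arc-generated if its topology is final for the set of all
continuous curves `ℝ → X`, i.e. coincides with the topology coinduced by them. -/
def IsArcGenerated (X : Type) [t : TopologicalSpace X] : Prop := t = arcGen X


/-- The mapping space of the category `C⁰`: the set of continuous maps with the
arc-generated coreflection of the compact-open topology. -/
def c0MapTop (X Y : Type) [TopologicalSpace X] [TopologicalSpace Y] :
    TopologicalSpace C(X, Y) :=
  arcGen C(X, Y)

/-!
Everything rests on one mechanism. Let `X` be arc-generated and `Y` locally compact, and let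
`f : X × Y → Z` be continuous along curves. If `ℝ × Y` is arc-generated, then `f ∘ (γ × id)` is
continuous for every curve `γ` of `X`, so the curried map `X → C(Y, Z)` is continuous along
curves, hence continuous; since `C(Y, -)` is right adjoint to `- × Y` for locally compact `Y`,
`f` itself is continuous.

The mechanism needs a base case: `ℝ × ℝ` is arc-generated. A map out of a normed space that is
continuous along curves is sequentially continuous, because every convergent sequence lies on a
curve: run the polygonal path through the sequence and reparametrise time `[0, ∞)` to `(0, 1]`,
so that the limit is reached at time `0`. Then `Y × ℝ`, hence `ℝ × Y`, is arc-generated for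
arc-generated `Y`, and the mechanism gives (2).

In (1), uncurrying preserves continuity because precomposing with the `X`-component of a curve of
`A × X` lands in `C(ℝ, Y)`, where evaluation is continuous; currying preserves it by the
mechanism, as `ℝ × X` is arc-generated.
-/

open Filter

section ArcGenerated

variable {X Y : Type} [TopologicalSpace X] [TopologicalSpace Y]

theorem arcGen_le : arcGen X ≤ ‹TopologicalSpace X› :=
  iSup_le fun c => continuous_iff_coinduced_le.1 c.2

theorem continuous_arcGen_of_continuous {c : ℝ → X} (hc : Continuous c) :
    Continuous[_, arcGen X] c :=
  continuous_iff_coinduced_le.2 <| le_iSup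
    (fun c : {c : ℝ → X // Continuous c} => TopologicalSpace.coinduced c.1 inferInstance) ⟨c, hc⟩

theorem continuous_arcGen_dom_iff {W : Type} {t : TopologicalSpace W} {g : X → W} :
    Continuous[arcGen X, t] g ↔ ∀ c : ℝ → X, Continuous c → Continuous[_, t] (g ∘ c) := by
  rw [arcGen, continuous_iSup_dom]
  simp only [continuous_coinduced_dom, Subtype.forall]

theorem isArcGenerated_iff :
    IsArcGenerated X ↔ ∀ {Z : Type} [TopologicalSpace Z] (f : X → Z),
      (∀ c : ℝ → X, Continuous c → Continuous (f ∘ c)) → Continuous f := by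
  refine ⟨fun hX Z _ f hf => ?_, fun h => le_antisymm ?_ arcGen_le⟩
  · unfold IsArcGenerated at hX
    rw [hX]
    exact continuous_arcGen_dom_iff.2 hf
  · exact continuous_id_iff_le.1 (@h X (arcGen X) id fun c hc => continuous_arcGen_of_continuous hc)

theorem IsArcGenerated.continuous_arcGen_iff (hX : IsArcGenerated X) {g : X → Y} :
    Continuous[_, arcGen Y] g ↔ Continuous g := by
  refine ⟨continuous_le_rng arcGen_le, fun hg => ?_⟩
  unfold IsArcGenerated at hX
  rw [hX]
  exact continuous_arcGen_dom_iff.2 fun c hc => continuous_arcGen_of_continuous (hg.comp hc)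

theorem IsArcGenerated.of_homeomorph (hX : IsArcGenerated X) (e : X ≃ₜ Y) : IsArcGenerated Y := by
  refine isArcGenerated_iff.2 fun f hf => ?_
  have hfe : Continuous (f ∘ e) :=
    isArcGenerated_iff.1 hX _ fun c hc => hf _ (e.continuous.comp hc)
  simpa [Function.comp_def] using hfe.comp e.symm.continuous

end ArcGenerated

section Polygonal

variable {E : Type*} [NormedAddCommGroup E] [NormedSpace ℝ E]

/-- The first `N` segments of the polygonal curve through `a 0, a 1, …` at the times `0, 1, …`:
the `n`-th summand moves from `0` to `a (n + 1) - a n` during `[n, n + 1]`. -/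
def polygonalSum (a : ℕ → E) (N : ℕ) (x : ℝ) : E :=
  a 0 + ∑ n ∈ Finset.range N, (projIcc (0 : ℝ) 1 zero_le_one (x - n) : ℝ) • (a (n + 1) - a n)

def polygonalCurve (a : ℕ → E) (x : ℝ) : E := polygonalSum a ⌈x⌉₊ x

theorem continuous_polygonalSum (a : ℕ → E) (N : ℕ) : Continuous (polygonalSum a N) :=
  continuous_const.add <| continuous_finsetSum _ fun _ _ =>
    (continuous_subtype_val.comp (continuous_projIcc.comp (continuous_sub_right _))).smul
      continuous_const

theorem polygonalCurve_eq_polygonalSum (a : ℕ → E) {x : ℝ} {N : ℕ} (hx : x ≤ N) :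
    polygonalCurve a x = polygonalSum a N x := by
  rw [polygonalCurve, polygonalSum, polygonalSum,
    Finset.sum_subset (Finset.range_subset_range.2 (Nat.ceil_le.2 hx))]
  intro n _ hn
  have hxn : x - n ≤ 0 := by
    have : (⌈x⌉₊ : ℝ) ≤ n := by exact_mod_cast not_lt.1 (Finset.mem_range.not.1 hn)
    linarith [Nat.le_ceil x]
  simp [projIcc_of_le_left _ hxn]

theorem continuous_polygonalCurve (a : ℕ → E) : Continuous (polygonalCurve a) := by
  refine continuous_iff_continuousAt.2 fun x₀ => ?_
  obtain ⟨N, hN⟩ := exists_nat_gt x₀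
  exact (continuous_polygonalSum a N).continuousAt.congr <|
    (eventually_lt_nhds hN).mono fun x hx => (polygonalCurve_eq_polygonalSum a hx.le).symm

theorem polygonalCurve_of_mem_Icc (a : ℕ → E) {m : ℕ} {x : ℝ} (hx : x ∈ Icc (m : ℝ) (m + 1)) :
    polygonalCurve a x = a m + (x - m) • (a (m + 1) - a m) := by
  have hxm : x - m ∈ Icc (0 : ℝ) 1 := ⟨by linarith [hx.1], by linarith [hx.2]⟩
  have hfull : ∀ n ∈ Finset.range m,
      (projIcc (0 : ℝ) 1 zero_le_one (x - n) : ℝ) • (a (n + 1) - a n) = a (n + 1) - a n := by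
    intro n hn
    have : (n : ℝ) + 1 ≤ m := by exact_mod_cast Finset.mem_range.1 hn
    simp [projIcc_of_right_le _ (by linarith [hx.1] : 1 ≤ x - n)]
  rw [polygonalCurve_eq_polygonalSum a (N := m + 1) (by push_cast; exact hx.2), polygonalSum,
    Finset.sum_range_succ, Finset.sum_congr rfl hfull, Finset.sum_range_sub,
    projIcc_of_mem _ hxm]
  abel

theorem polygonalCurve_natCast (a : ℕ → E) (m : ℕ) : polygonalCurve a m = a m := by
  simp [polygonalCurve_of_mem_Icc a (m := m) ⟨le_rfl, by linarith⟩]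

theorem tendsto_polygonalCurve {a : ℕ → E} {L : E} (ha : Tendsto a atTop (𝓝 L)) :
    Tendsto (polygonalCurve a) atTop (𝓝 L) := by
  rw [Metric.tendsto_atTop] at ha ⊢
  intro ε hε
  obtain ⟨N, hN⟩ := ha ε hε
  refine ⟨N, fun x hx => ?_⟩
  have hx₀ : 0 ≤ x := (Nat.cast_nonneg N).trans hx
  have hfloor := Nat.floor_le hx₀
  have hfloor' := Nat.lt_floor_add_one x
  have hNm : N ≤ ⌊x⌋₊ := Nat.le_floor hx
  rw [polygonalCurve_of_mem_Icc a ⟨hfloor, hfloor'.le⟩]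
  exact (convex_ball L ε).add_smul_sub_mem (hN _ hNm) (hN _ (hNm.trans (Nat.le_succ _)))
    ⟨by linarith, by linarith⟩

theorem exists_curve_of_tendsto {a : ℕ → E} {L : E} (ha : Tendsto a atTop (𝓝 L)) :
    ∃ φ : ℝ → E, Continuous φ ∧ φ 0 = L ∧ ∀ n : ℕ, φ (1 / (n + 1)) = a n := by
  set φ : ℝ → E := fun u => if u ≤ 0 then L else polygonalCurve a (u⁻¹ - 1)
  have hφpos : ∀ u, 0 < u → φ u = polygonalCurve a (u⁻¹ - 1) := fun u hu => if_neg hu.not_ge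
  refine ⟨φ, continuous_iff_continuousAt.2 fun u => ?_, if_pos le_rfl, fun n => ?_⟩
  · rcases lt_trichotomy u 0 with hu | rfl | hu
    · exact continuousAt_const.congr <|
        (eventually_lt_nhds hu).mono fun v hv => (if_pos hv.le).symm
    · refine continuousAt_iff_continuous_left_right.2
        ⟨continuousWithinAt_const.congr (fun v hv => if_pos hv) (if_pos le_rfl),
          continuousWithinAt_Ioi_iff_Ici.1 ?_⟩
      rw [ContinuousWithinAt, show φ 0 = L from if_pos le_rfl]
      have hinv : Tendsto (fun v : ℝ => v⁻¹ - 1) (𝓝[>] 0) atTop := by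
        simpa [sub_eq_add_neg] using tendsto_atTop_add_const_right _ (-1) tendsto_inv_nhdsGT_zero
      refine ((tendsto_polygonalCurve ha).comp hinv).congr' ?_
      filter_upwards [self_mem_nhdsWithin] with v hv using (hφpos v hv).symm
    · exact ((continuous_polygonalCurve a).continuousAt.comp
        ((continuousAt_inv₀ hu.ne').sub continuousAt_const)).congr <|
          (eventually_gt_nhds hu).mono fun v hv => (hφpos v hv).symm
  · rw [hφpos _ (by positivity), one_div, inv_inv, add_sub_cancel_right, polygonalCurve_natCast]

end Polygonal

theorem isArcGenerated_of_normedSpace (E : Type) [NormedAddCommGroup E] [NormedSpace ℝ E] :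
    IsArcGenerated E := by
  refine isArcGenerated_iff.2 fun f hf => SeqContinuous.continuous fun a L ha => ?_
  obtain ⟨φ, hφ, hφ0, hφa⟩ := exists_curve_of_tendsto ha
  have := ((hf φ hφ).tendsto 0).comp tendsto_one_div_add_atTop_nhds_zero_nat
  simpa only [Function.comp_def, hφ0, hφa] using this

section Products

variable {A X Y : Type} [TopologicalSpace A] [TopologicalSpace X] [TopologicalSpace Y]

def curryAlongCurves {f : A × X → Y}
    (hf : ∀ γ : ℝ → A, Continuous γ → Continuous (f ∘ Prod.map γ id)) (a : A) : C(X, Y) :=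
  ⟨fun x => f (a, x), (hf _ continuous_const).comp (Continuous.prodMk_right (0 : ℝ))⟩

theorem continuous_curryAlongCurves (hA : IsArcGenerated A) {f : A × X → Y}
    (hf : ∀ γ : ℝ → A, Continuous γ → Continuous (f ∘ Prod.map γ id)) :
    Continuous (curryAlongCurves hf) :=
  isArcGenerated_iff.1 hA _ fun γ hγ => (ContinuousMap.curry ⟨_, hf γ hγ⟩).continuous

theorem IsArcGenerated.prod_of_real_prod [LocallyCompactSpace Y] (hX : IsArcGenerated X)
    (hRY : IsArcGenerated (ℝ × Y)) : IsArcGenerated (X × Y) := by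
  refine isArcGenerated_iff.2 fun f hf => ?_
  have hfγ : ∀ γ : ℝ → X, Continuous γ → Continuous (f ∘ Prod.map γ id) := fun γ hγ =>
    isArcGenerated_iff.1 hRY _ fun c hc => hf _ ((hγ.prodMap continuous_id).comp hc)
  exact ContinuousMap.continuous_uncurry_of_continuous ⟨_, continuous_curryAlongCurves hX hfγ⟩

theorem IsArcGenerated.real_prod (hY : IsArcGenerated Y) : IsArcGenerated (ℝ × Y) :=
  (hY.prod_of_real_prod (isArcGenerated_of_normedSpace (ℝ × ℝ))).of_homeomorph
    (Homeomorph.prodComm Y ℝ)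

theorem IsArcGenerated.prod [LocallyCompactSpace Y] (hX : IsArcGenerated X)
    (hY : IsArcGenerated Y) : IsArcGenerated (X × Y) :=
  hX.prod_of_real_prod hY.real_prod

theorem IsArcGenerated.continuous_comp_prodMap (hX : IsArcGenerated X) {f : A × X → Y}
    (hf : Continuous[arcGen (A × X), _] f) {γ : ℝ → A} (hγ : Continuous γ) :
    Continuous (f ∘ Prod.map γ id) :=
  @Continuous.comp _ _ _ _ (arcGen (A × X)) _ _ _ hf
    (hX.real_prod.continuous_arcGen_iff.2 (hγ.prodMap continuous_id))

theorem continuous_uncurry_of_continuous_c0MapTop {F : A → C(X, Y)}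
    (hF : Continuous[_, c0MapTop X Y] F) :
    Continuous[arcGen (A × X), _] fun p : A × X => F p.1 p.2 := by
  refine continuous_arcGen_dom_iff.2 fun c hc => ?_
  have hF' : Continuous F := continuous_le_rng arcGen_le hF
  have hpre : Continuous fun s : ℝ => (F (c s).1).comp ⟨fun u => (c u).2, continuous_snd.comp hc⟩ :=
    (ContinuousMap.continuous_precomp _).comp (hF'.comp (continuous_fst.comp hc))
  exact hpre.eval continuous_id

def c0UncurryEquiv (hA : IsArcGenerated A) (hX : IsArcGenerated X) :
    {F : A → C(X, Y) // Continuous[_, c0MapTop X Y] F} ≃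
      {f : A × X → Y // Continuous[arcGen (A × X), _] f} where
  toFun F := ⟨fun p => F.1 p.1 p.2, continuous_uncurry_of_continuous_c0MapTop F.2⟩
  invFun f := ⟨curryAlongCurves fun _ => hX.continuous_comp_prodMap f.2,
    hA.continuous_arcGen_iff.2 (continuous_curryAlongCurves hA _)⟩
  left_inv _ := rfl
  right_inv _ := rfl

end Products

/-- **Statement 7.** (1) The category `C⁰` of arc-generated spaces is cartesian
closed: for arc-generated `A`, `X`, `Y`, the exponential law for sets restricts to a
(natural) bijection `C⁰(A, C⁰(X,Y)) ≅ C⁰(A × X, Y)`, where the product `A × X` is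
taken in `C⁰` (i.e. carries `arcGen` of the product topology) and the mapping space
carries `arcGen` of the compact-open topology.
(2) If `X` and `Y` are arc-generated and `Y` is locally compact, then the product of
`X` and `Y` in `C⁰` coincides with the product in `Top`, i.e. the product topology is
already arc-generated. -/
theorem c0_cartesianClosed_and_locallyCompact_prod :
    (∀ (A X Y : Type) [TopologicalSpace A] [TopologicalSpace X] [TopologicalSpace Y],
      IsArcGenerated A → IsArcGenerated X → IsArcGenerated Y →
      ∃ e : {F : A → C(X, Y) // Continuous[_, c0MapTop X Y] F} ≃
            {f : A × X → Y // Continuous[arcGen (A × X), _] f},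
        ∀ (F : {F : A → C(X, Y) // Continuous[_, c0MapTop X Y] F}) (a : A) (x : X),
          (e F).1 (a, x) = (F.1 a) x) ∧
    ∀ (X Y : Type) [TopologicalSpace X] [TopologicalSpace Y],
      IsArcGenerated X → IsArcGenerated Y → LocallyCompactSpace Y →
      IsArcGenerated (X × Y) :=
  ⟨fun _ _ _ _ _ _ hA hX _ => ⟨c0UncurryEquiv hA hX, fun _ _ _ => rfl⟩,
    fun _ _ _ _ hX hY _ => hX.prod hY⟩
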